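/- Let λ₁ ≥ λ₂ ≥ λ₃ be real numbers with arctan λ₁ + arctan λ₂ + arctan λ₃ = π/2. Then λ₂ + λ₃ > 0 and consequently max(λ₁, |λ₂|, |λ₃|) < λ₁ + λ₂ + λ₃. -/

import Mathlib

open Real

theorem Real.arctan_add_arctan_pos_iff {a b : ℝ} : 0 < arctan a + arctan b ↔ 0 < a + b := by
  rw [← sub_neg_eq_add, sub_pos, ← arctan_neg, arctan_strictMono.lt_iff_lt, ← sub_pos,
    sub_neg_eq_add]

theorem stmt_8 (l₁ l₂ l₃ : ℝ)
    (hord₁ : l₁ ≥ l₂) (hord₂ : l₂ ≥ l₃)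
    (hΘ : arctan l₁ + arctan l₂ + arctan l₃ = π/2) :
    l₂ + l₃ > 0 ∧ max l₁ (max |l₂| |l₃|) < l₁ + l₂ + l₃ := by
  have h₂₃ : 0 < l₂ + l₃ :=
    arctan_add_arctan_pos_iff.mp (by linarith [arctan_lt_pi_div_two l₁])
  exact ⟨h₂₃, max_lt (by linarith) <|
    max_lt (abs_lt.mpr ⟨by linarith, by linarith⟩) (abs_lt.mpr ⟨by linarith, by linarith⟩)⟩
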